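/- arXiv:1402.7235 — 3 statements merged into one kernel-verified Lean document; each statement's English description precedes it below -/
import Mathlib

section
/- Let G be a finite simple graph, ℓ ≥ 1, and let L₀, L₁ be ℓ-links of G. Then there is at most one (ℓ+1)-link Q of G such that L₀ and L₁ are the two length-ℓ subsequences of Q. Consequently, the ℓ-link graph of a simple graph is simple. -/
/-- A multigraph: a type of vertices, a type of edges, and an incidence map
sending each edge to an unordered pair of vertices. -/
structure Multigraph (V E : Type) where
  inc : E → Sym2 V

namespace Multigraph

variable {V E : Type}

/-- A multigraph is loopless if no edge joins a vertex to itself. -/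
def Loopless (G : Multigraph V E) : Prop := ∀ e : E, ¬ (G.inc e).IsDiag

/-- A multigraph is simple if it is loopless and has no parallel edges. -/
def Simple (G : Multigraph V E) : Prop := G.Loopless ∧ Function.Injective G.inc

/-- The underlying simple graph of a multigraph. -/
def toSimple (G : Multigraph V E) : SimpleGraph V where
  Adj u v := u ≠ v ∧ ∃ e : E, G.inc e = s(u, v)
  symm := by
    constructor
    rintro u v ⟨huv, e, he⟩
    exact ⟨Ne.symm huv, e, by rw [he, Sym2.eq_swap]⟩
  loopless := by constructor; rintro v ⟨h, _⟩; exact h rfl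

/-- The degree of a vertex: the number of edges incident to it. -/
noncomputable def degree (G : Multigraph V E) (v : V) : ℕ := Nat.card {e : E // v ∈ G.inc e}

/-- The number of edges of a multigraph. -/
noncomputable def edgeCard (_G : Multigraph V E) : ℕ := Nat.card E

/-- An `ℓ`-arc (non-backtracking walk of length `ℓ`): an alternating sequence of
vertices and edges with consecutive edges distinct. -/
@[ext]
structure Arc (G : Multigraph V E) (ℓ : ℕ) where
  verts : Fin (ℓ + 1) → V
  edges : Fin ℓ → E
  inc_eq : ∀ i : Fin ℓ, G.inc (edges i) = s(verts i.castSucc, verts i.succ)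
  nb : ∀ i j : Fin ℓ, (i : ℕ) + 1 = (j : ℕ) → edges i ≠ edges j

variable {G : Multigraph V E}

/-- The reverse of an arc. -/
def Arc.reverse {ℓ : ℕ} (A : G.Arc ℓ) : G.Arc ℓ where
  verts i := A.verts i.rev
  edges i := A.edges i.rev
  inc_eq i := by
    show G.inc (A.edges i.rev) = s(A.verts i.castSucc.rev, A.verts i.succ.rev)
    rw [Fin.rev_castSucc, Fin.rev_succ, A.inc_eq i.rev, Sym2.eq_swap]
  nb i j hij h := by
    refine A.nb j.rev i.rev ?_ (h.symm)
    have hi := i.isLt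
    have hj := j.isLt
    simp only [Fin.val_rev]
    omega

lemma Arc.reverse_reverse {ℓ : ℕ} (A : G.Arc ℓ) : A.reverse.reverse = A := by
  ext i
  · show A.verts i.rev.rev = A.verts i
    rw [Fin.rev_rev]
  · show A.edges i.rev.rev = A.edges i
    rw [Fin.rev_rev]

/-- The length-`ℓ` prefix of an `(ℓ+1)`-arc. -/
def Arc.init {ℓ : ℕ} (A : G.Arc (ℓ + 1)) : G.Arc ℓ where
  verts i := A.verts i.castSucc
  edges i := A.edges i.castSucc
  inc_eq i := by
    show G.inc (A.edges i.castSucc) = s(A.verts i.castSucc.castSucc, A.verts i.succ.castSucc)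
    rw [A.inc_eq i.castSucc, Fin.succ_castSucc]
  nb i j hij h := A.nb i.castSucc j.castSucc (by simpa using hij) h

/-- The length-`ℓ` suffix of an `(ℓ+1)`-arc. -/
def Arc.tail {ℓ : ℕ} (A : G.Arc (ℓ + 1)) : G.Arc ℓ where
  verts i := A.verts i.succ
  edges i := A.edges i.succ
  inc_eq i := by
    show G.inc (A.edges i.succ) = s(A.verts i.castSucc.succ, A.verts i.succ.succ)
    rw [A.inc_eq i.succ, Fin.succ_castSucc]
  nb i j hij h := A.nb i.succ j.succ (by simpa using hij) h

lemma Arc.reverse_init {ℓ : ℕ} (A : G.Arc (ℓ + 1)) : A.reverse.init = A.tail.reverse := by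
  ext i
  · show A.verts (Fin.castSucc i).rev = A.verts i.rev.succ
    rw [Fin.rev_castSucc]
  · show A.edges (Fin.castSucc i).rev = A.edges i.rev.succ
    rw [Fin.rev_castSucc]

lemma Arc.reverse_tail {ℓ : ℕ} (A : G.Arc (ℓ + 1)) : A.reverse.tail = A.init.reverse := by
  ext i
  · show A.verts (Fin.succ i).rev = A.verts i.rev.castSucc
    rw [Fin.rev_succ]
  · show A.edges (Fin.succ i).rev = A.edges i.rev.castSucc
    rw [Fin.rev_succ]

/-- The reversal relation on arcs. -/
def LinkRel (G : Multigraph V E) {ℓ : ℕ} (A B : G.Arc ℓ) : Prop := B = A.reverse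

/-- An `ℓ`-link: an `ℓ`-arc up to reversal. -/
def Link (G : Multigraph V E) (ℓ : ℕ) : Type := Quot (G.LinkRel (ℓ := ℓ))

/-- The `ℓ`-link determined by an `ℓ`-arc. -/
def Link.mk {ℓ : ℕ} (A : G.Arc ℓ) : G.Link ℓ := Quot.mk (G.LinkRel) A

lemma Link.mk_reverse {ℓ : ℕ} (A : G.Arc ℓ) : (Link.mk A.reverse : G.Link ℓ) = Link.mk A :=
  (Quot.sound (show G.LinkRel A A.reverse from rfl)).symm

/-- The unordered pair of `ℓ`-links that are the two length-`ℓ` subsequences of an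
`(ℓ+1)`-link. -/
def linkEnds (G : Multigraph V E) {ℓ : ℕ} : G.Link (ℓ + 1) → Sym2 (G.Link ℓ) :=
  Quot.lift (fun A => s(Link.mk A.init, Link.mk A.tail)) (by
    rintro A B rfl
    show s(Link.mk A.init, Link.mk A.tail) = s(Link.mk A.reverse.init, Link.mk A.reverse.tail)
    rw [Arc.reverse_init, Arc.reverse_tail, Link.mk_reverse, Link.mk_reverse, Sym2.eq_swap])

/-- The `ℓ`-link graph of `G`: vertices are the `ℓ`-links, and for each
`(ℓ+1)`-link there is one edge joining its two length-`ℓ` subsequences. -/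
def linkGraph (G : Multigraph V E) (ℓ : ℕ) : Multigraph (G.Link ℓ) (G.Link (ℓ + 1)) where
  inc := G.linkEnds

/-- The set of edges used by an arc. -/
def Arc.edgeSet {ℓ : ℕ} (A : G.Arc ℓ) : Set E := Set.range A.edges

/-- The set of vertices used by an arc. -/
def Arc.vertSet {ℓ : ℕ} (A : G.Arc ℓ) : Set V := Set.range A.verts

lemma Arc.edgeSet_reverse {ℓ : ℕ} (A : G.Arc ℓ) : A.reverse.edgeSet = A.edgeSet := by
  ext e
  constructor
  · rintro ⟨i, rfl⟩; exact ⟨i.rev, rfl⟩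
  · rintro ⟨i, rfl⟩; exact ⟨i.rev, by show A.edges i.rev.rev = _; rw [Fin.rev_rev]⟩

lemma Arc.vertSet_reverse {ℓ : ℕ} (A : G.Arc ℓ) : A.reverse.vertSet = A.vertSet := by
  ext v
  constructor
  · rintro ⟨i, rfl⟩; exact ⟨i.rev, rfl⟩
  · rintro ⟨i, rfl⟩; exact ⟨i.rev, by show A.verts i.rev.rev = _; rw [Fin.rev_rev]⟩

/-- The set of edges used by a link. -/
def Link.edgeSet {ℓ : ℕ} : G.Link ℓ → Set E :=
  Quot.lift Arc.edgeSet (by rintro A B rfl; exact (Arc.edgeSet_reverse A).symm)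

/-- The set of vertices used by a link. -/
def Link.vertSet {ℓ : ℕ} : G.Link ℓ → Set V :=
  Quot.lift Arc.vertSet (by rintro A B rfl; exact (Arc.vertSet_reverse A).symm)

lemma Arc.tail_init_comm {ℓ : ℕ} (A : G.Arc (ℓ + 2)) : A.tail.init = A.init.tail := by
  ext i
  · show A.verts (Fin.castSucc i).succ = A.verts (Fin.succ i).castSucc
    rw [Fin.succ_castSucc]
  · show A.edges (Fin.castSucc i).succ = A.edges (Fin.succ i).castSucc
    rw [Fin.succ_castSucc]

/-- The middle `ℓ`-segment of an `(ℓ+2)`-arc, obtained by deleting the first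
and last edge. -/
def Arc.mid2 {ℓ : ℕ} (A : G.Arc (ℓ + 2)) : G.Arc ℓ := A.tail.init

lemma Arc.mid2_reverse {ℓ : ℕ} (A : G.Arc (ℓ + 2)) : A.reverse.mid2 = A.mid2.reverse := by
  show A.reverse.tail.init = A.tail.init.reverse
  rw [Arc.reverse_tail, Arc.reverse_init, Arc.tail_init_comm]

/-- The middle `ℓ`-segment of an `(ℓ+2)`-link. -/
def Link.mid2 {ℓ : ℕ} : G.Link (ℓ + 2) → G.Link ℓ :=
  Quot.lift (fun A => Link.mk A.mid2) (by
    rintro A B rfl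
    show Link.mk A.mid2 = Link.mk A.reverse.mid2
    rw [Arc.mid2_reverse, Link.mk_reverse])

/-- The middle unit of an arc: its middle vertex if its length is even, and its
middle edge if its length is odd. -/
def Arc.midUnit {ℓ : ℕ} (A : G.Arc ℓ) : V ⊕ E :=
  if h : Even ℓ then Sum.inl (A.verts ⟨ℓ / 2, by omega⟩)
  else Sum.inr (A.edges ⟨ℓ / 2, by
    have : ℓ % 2 = 1 := Nat.not_even_iff.mp h
    omega⟩)

lemma Arc.midUnit_reverse {ℓ : ℕ} (A : G.Arc ℓ) : A.reverse.midUnit = A.midUnit := by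
  by_cases h : Even ℓ
  · rw [Arc.midUnit, Arc.midUnit, dif_pos h, dif_pos h]
    have hk : ℓ % 2 = 0 := Nat.even_iff.mp h
    congr 1
    show A.verts (⟨ℓ / 2, _⟩ : Fin (ℓ + 1)).rev = A.verts _
    congr 1
    ext
    rw [Fin.val_rev]
    show ℓ + 1 - (ℓ / 2 + 1) = ℓ / 2
    omega
  · rw [Arc.midUnit, Arc.midUnit, dif_neg h, dif_neg h]
    have hk : ℓ % 2 = 1 := Nat.not_even_iff.mp h
    congr 1
    show A.edges (⟨ℓ / 2, _⟩ : Fin ℓ).rev = A.edges _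
    congr 1
    ext
    rw [Fin.val_rev]
    show ℓ - (ℓ / 2 + 1) = ℓ / 2
    omega

/-- The middle unit of a link: its middle vertex (even length) or middle edge
(odd length). -/
def Link.midUnit {ℓ : ℕ} : G.Link ℓ → V ⊕ E :=
  Quot.lift Arc.midUnit (by rintro A B rfl; exact (Arc.midUnit_reverse A).symm)

/-- `G` has a (nonnull) subgraph of minimum degree at least `d`. -/
def HasMinDegSubgraph (G : Multigraph V E) (d : ℕ) : Prop :=
  ∃ (V' : Set V) (E' : Set E), V'.Nonempty ∧ (∀ e ∈ E', ∀ v ∈ G.inc e, v ∈ V') ∧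
    ∀ v ∈ V', d ≤ Nat.card {e : E // e ∈ E' ∧ v ∈ G.inc e}

/-- The degeneracy of `G`: the maximum over subgraphs of the minimum degree. -/
noncomputable def degeneracy (G : Multigraph V E) : ℕ := sSup {d | G.HasMinDegSubgraph d}

/-- The edge-chromatic number of a multigraph: the least `t` such that the edges
can be `t`-coloured with edges sharing an endpoint getting distinct colours. -/
noncomputable def edgeChromaticNumber (G : Multigraph V E) : ℕ :=
  sInf {t | ∃ c : E → Fin t, ∀ e f : E, e ≠ f → (∃ v, v ∈ G.inc e ∧ v ∈ G.inc f) → c e ≠ c f}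

/-- The complete bipartite multigraph `K_{n,m}` (one edge for each pair). -/
def completeBipartiteMG (n m : ℕ) : Multigraph (Fin n ⊕ Fin m) (Fin n × Fin m) :=
  ⟨fun p => s(Sum.inl p.1, Sum.inr p.2)⟩

end Multigraph

/-- `H` contains a complete minor on `t` branch sets: `t` pairwise disjoint
nonempty connected subsets of vertices with an edge between every two of them. -/
def SimpleGraph.HasKMinor {W : Type} (H : SimpleGraph W) (t : ℕ) : Prop :=
  ∃ B : Fin t → Set W,
    (∀ i, (B i).Nonempty) ∧
    (∀ i, ((H.induce (B i)).Connected)) ∧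
    (∀ i j, i ≠ j → Disjoint (B i) (B j)) ∧
    (∀ i j, i ≠ j → ∃ u ∈ B i, ∃ v ∈ B j, H.Adj u v)

/-! In a simple graph an arc is determined by its vertex sequence, so an `(ℓ+1)`-arc is
determined by its prefix and suffix once their orientations are known. If two arcs `A`, `B`
have the same prefix and suffix links but with inconsistent orientations, comparing the
overlap `A.init.tail = A.tail.init` shows that a subarc `C` of `B` satisfies
`C.init = C.tail.reverse` (a palindrome, hence a loop or an immediate backtrack at its
middle), or that `B.verts 0 = B.verts 2` (a backtrack, since there are no parallel edges).
For `ℓ = 0` orientations do not arise, as every `0`-arc is its own reverse. -/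

namespace Multigraph

variable {V E : Type} {G : Multigraph V E} {ℓ : ℕ}

lemma Arc.reverse_involutive : Function.Involutive (Arc.reverse : G.Arc ℓ → G.Arc ℓ) :=
  Arc.reverse_reverse

lemma Arc.reverse_eq_self_of_length_zero (A : G.Arc 0) : A.reverse = A := by
  ext i
  · exact congrArg A.verts (Fin.ext (by have := i.isLt; simp only [Fin.val_rev]; omega))
  · exact i.elim0

lemma Link.mk_eq_mk_iff {A B : G.Arc ℓ} : Link.mk A = Link.mk B ↔ A = B ∨ A = B.reverse := by
  refine ⟨fun h => ?_, ?_⟩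
  · let orbit : G.Link ℓ → Set (G.Arc ℓ) := Quot.lift (fun A => {A, A.reverse}) (by
      rintro A _ rfl
      rw [Arc.reverse_reverse, Set.pair_comm])
    exact (h ▸ Set.mem_insert A {A.reverse} : A ∈ orbit (Link.mk B))
  · rintro (rfl | rfl)
    · rfl
    · exact Link.mk_reverse B

lemma Arc.ext_of_verts (hinj : Function.Injective G.inc) {A B : G.Arc ℓ}
    (h : A.verts = B.verts) : A = B := by
  ext i
  · rw [h]
  · exact hinj (by rw [A.inc_eq, B.inc_eq, h])

lemma Arc.verts_castSucc_ne_verts_succ (hl : G.Loopless) (A : G.Arc ℓ) (i : Fin ℓ) :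
    A.verts i.castSucc ≠ A.verts i.succ := fun h =>
  hl (A.edges i) (by rw [A.inc_eq, h]; exact Sym2.mk_isDiag_iff.mpr rfl)

lemma Arc.eq_of_init_eq_of_tail_eq (hinj : Function.Injective G.inc) {A B : G.Arc (ℓ + 1)}
    (h₁ : A.init = B.init) (h₂ : A.tail = B.tail) : A = B := by
  refine Arc.ext_of_verts hinj (funext fun i => Fin.lastCases ?_ (fun j => ?_) i)
  · exact congrFun (congrArg Arc.verts h₂) (Fin.last ℓ)
  · exact congrFun (congrArg Arc.verts h₁) j

lemma Arc.init_ne_tail (hl : G.Loopless) (A : G.Arc (ℓ + 1)) : A.init ≠ A.tail := fun h =>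
  A.verts_castSucc_ne_verts_succ hl 0 (congrFun (congrArg Arc.verts h) 0)

lemma Arc.init_ne_tail_reverse (hl : G.Loopless) (A : G.Arc (ℓ + 1)) :
    A.init ≠ A.tail.reverse := by
  intro h
  rcases Nat.even_or_odd' ℓ with ⟨k, rfl | rfl⟩
  · have hk : (⟨k, by omega⟩ : Fin (2 * k + 1)).rev = ⟨k, by omega⟩ :=
      Fin.ext (by simp only [Fin.val_rev]; omega)
    have hv := congrFun (congrArg Arc.verts h) ⟨k, by omega⟩
    exact A.verts_castSucc_ne_verts_succ hl _ (hv.trans (congrArg (A.verts ∘ Fin.succ) hk))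
  · have hk : (⟨k, by omega⟩ : Fin (2 * k + 1)).rev = ⟨k, by omega⟩ :=
      Fin.ext (by simp only [Fin.val_rev]; omega)
    have he := congrFun (congrArg Arc.edges h) ⟨k, by omega⟩
    exact A.nb _ _ (by simp) (he.trans (congrArg (A.edges ∘ Fin.succ) hk))

lemma Arc.init_init_ne_tail_tail (hinj : Function.Injective G.inc) (A : G.Arc (ℓ + 2)) :
    A.init.init ≠ A.tail.tail := by
  intro h
  have h₀₂ : A.verts 0 = A.verts 2 := congrFun (congrArg Arc.verts h) 0
  have hinc : G.inc (A.edges 0) = G.inc (A.edges 1) := by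
    rw [A.inc_eq, A.inc_eq, Sym2.eq_swap]
    exact congrArg₂ (fun u w => s(u, w)) rfl h₀₂
  exact A.nb 0 1 (by simp) (hinj hinc)

lemma Link.mk_init_ne_mk_tail (hl : G.Loopless) (A : G.Arc (ℓ + 1)) :
    Link.mk A.init ≠ Link.mk A.tail := by
  rw [Ne, Link.mk_eq_mk_iff, not_or]
  exact ⟨A.init_ne_tail hl, A.init_ne_tail_reverse hl⟩

lemma Arc.eq_of_mk_init_eq_of_mk_tail_eq (hs : G.Simple) {A B : G.Arc (ℓ + 1)}
    (h₁ : Link.mk A.init = Link.mk B.init) (h₂ : Link.mk A.tail = Link.mk B.tail) : A = B := by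
  rw [Link.mk_eq_mk_iff] at h₁ h₂
  cases ℓ with
  | zero =>
    simp only [Arc.reverse_eq_self_of_length_zero, or_self] at h₁ h₂
    exact Arc.eq_of_init_eq_of_tail_eq hs.2 h₁ h₂
  | succ m =>
    have hA := A.tail_init_comm
    have hB := B.tail_init_comm
    rcases h₁ with h₁ | h₁ <;> rcases h₂ with h₂ | h₂
    · exact Arc.eq_of_init_eq_of_tail_eq hs.2 h₁ h₂
    · refine absurd ?_ (B.tail.init_ne_tail_reverse hs.1)
      rw [hB, ← h₁, ← hA, h₂, Arc.reverse_init]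
    · refine absurd ?_ (B.init.init_ne_tail_reverse hs.1)
      rw [← hB, ← h₂, hA, h₁, Arc.reverse_tail, Arc.reverse_reverse]
    · refine absurd (Arc.reverse_involutive.injective ?_) (B.init_init_ne_tail_tail hs.2)
      rw [← Arc.reverse_tail, ← h₁, ← hA, h₂, Arc.reverse_init]

lemma linkEnds_injective (hs : G.Simple) : Function.Injective (G.linkEnds (ℓ := ℓ)) := by
  rintro ⟨A⟩ ⟨B⟩ h
  show Link.mk A = Link.mk B
  rcases Sym2.eq_iff.mp h with ⟨h₁, h₂⟩ | ⟨h₁, h₂⟩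
  · exact congrArg Link.mk (Arc.eq_of_mk_init_eq_of_mk_tail_eq hs h₁ h₂)
  · rw [← Link.mk_reverse B]
    refine congrArg Link.mk (Arc.eq_of_mk_init_eq_of_mk_tail_eq hs ?_ ?_)
    · rw [Arc.reverse_init, Link.mk_reverse, h₁]
    · rw [Arc.reverse_tail, Link.mk_reverse, h₂]

lemma Simple.linkGraph (hs : G.Simple) (ℓ : ℕ) : (G.linkGraph ℓ).Simple := by
  refine ⟨?_, linkEnds_injective hs⟩
  rintro ⟨A⟩ hdiag
  exact Link.mk_init_ne_mk_tail hs.1 A (Sym2.mk_isDiag_iff.mp hdiag)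

end Multigraph

theorem linkGraph_simple_general {V E : Type} (G : Multigraph V E) (hs : G.Simple)
    (ℓ : ℕ) (L₀ L₁ : G.Link ℓ) (Q Q' : G.Link (ℓ + 1))
    (hQ : G.linkEnds Q = s(L₀, L₁)) (hQ' : G.linkEnds Q' = s(L₀, L₁)) :
    Q = Q' ∧ (G.linkGraph ℓ).Simple :=
  ⟨Multigraph.linkEnds_injective hs (hQ.trans hQ'.symm), hs.linkGraph ℓ⟩

/-- In a finite simple graph, at most one `(ℓ+1)`-link has a given pair
of `ℓ`-links as its two length-`ℓ` subsequences; hence the `ℓ`-link graph of a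
simple graph is simple. -/
theorem linkGraph_simple {V E : Type} (G : Multigraph V E) (hs : G.Simple)
    (ℓ : ℕ) (hℓ : 1 ≤ ℓ) (L₀ L₁ : G.Link ℓ) (Q Q' : G.Link (ℓ + 1))
    (hQ : G.linkEnds Q = s(L₀, L₁)) (hQ' : G.linkEnds Q' = s(L₀, L₁)) :
    Q = Q' ∧ (G.linkGraph ℓ).Simple :=
  linkGraph_simple_general G hs ℓ L₀ L₁ Q Q' hQ hQ'
end

section
/- Let G be a finite loopless multigraph and ℓ ≥ 2. Then the chromatic number of the ℓ-link graph satisfies χ(L_ℓ(G)) ≤ χ(L_{ℓ−2}(G)). -/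
/-!
Deleting the first and last edge of an `ℓ`-link gives an `(ℓ-2)`-link. The two `ℓ`-links joined by an
`(ℓ+1)`-link `A` are sent to the two ends of the middle `(ℓ-1)`-link of `A`, and these are distinct:
two consecutive `(ℓ-2)`-subsequences of a walk have different middle units, since their middle
vertices span an edge (no loops) or their middle edges are consecutive (no backtracking). So taking
middles is a graph homomorphism `L_ℓ(G) → L_{ℓ-2}(G)`, and colourings pull back along it.
-/

namespace Multigraph

variable {V E V' E' : Type}

def toSimpleHom {G : Multigraph V E} {G' : Multigraph V' E'} (hG' : G'.Loopless)
    (f : V → V') (g : E → E') (hinc : ∀ e, G'.inc (g e) = (G.inc e).map f) :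
    G.toSimple →g G'.toSimple where
  toFun := f
  map_rel' := by
    rintro u v ⟨-, e, he⟩
    have hfe : G'.inc (g e) = s(f u, f v) := by rw [hinc, he, Sym2.map_mk]
    refine ⟨fun huv => hG' (g e) ?_, g e, hfe⟩
    rw [hfe, Sym2.mk_isDiag_iff]
    exact huv

variable {G : Multigraph V E} {m : ℕ}

lemma Arc.midUnit_init_ne_midUnit_tail (hG : G.Loopless) (B : G.Arc (m + 1)) :
    B.init.midUnit ≠ B.tail.midUnit := by
  by_cases hm : Even m
  · rw [Arc.midUnit, Arc.midUnit, dif_pos hm, dif_pos hm, Ne, Sum.inl.injEq]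
    intro h
    apply hG (B.edges ⟨m / 2, by omega⟩)
    rw [B.inc_eq, Sym2.mk_isDiag_iff]
    exact h
  · rw [Arc.midUnit, Arc.midUnit, dif_neg hm, dif_neg hm, Ne, Sum.inr.injEq]
    exact B.nb ⟨m / 2, by omega⟩ ⟨m / 2 + 1, by grind⟩ rfl

lemma linkGraph_loopless (hG : G.Loopless) : (G.linkGraph m).Loopless := by
  rintro ⟨B⟩ h
  change s(Link.mk B.init, Link.mk B.tail).IsDiag at h
  rw [Sym2.mk_isDiag_iff] at h
  exact B.midUnit_init_ne_midUnit_tail hG (congrArg Link.midUnit h)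

lemma Arc.mid2_init (A : G.Arc (m + 3)) : A.mid2.init = A.init.mid2 :=
  congrArg Arc.init A.tail_init_comm

lemma Arc.mid2_tail (A : G.Arc (m + 3)) : A.mid2.tail = A.tail.mid2 :=
  A.tail.tail_init_comm.symm

lemma linkEnds_mid2 (e : G.Link (m + 3)) : G.linkEnds e.mid2 = (G.linkEnds e).map Link.mid2 := by
  induction e using Quot.ind with
  | mk A =>
    change s(Link.mk A.mid2.init, Link.mk A.mid2.tail) = s(Link.mk A.init.mid2, Link.mk A.tail.mid2)
    rw [Arc.mid2_init, Arc.mid2_tail]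

def linkGraphMid2Hom (hG : G.Loopless) :
    (G.linkGraph (m + 2)).toSimple →g (G.linkGraph m).toSimple :=
  toSimpleHom (linkGraph_loopless hG) Link.mid2 Link.mid2 linkEnds_mid2

end Multigraph

theorem chromatic_linkGraph_mono_general {V E : Type} (G : Multigraph V E)
    (hG : G.Loopless) (ℓ : ℕ) (hℓ : 2 ≤ ℓ) :
    ((G.linkGraph ℓ).toSimple).chromaticNumber
      ≤ ((G.linkGraph (ℓ - 2)).toSimple).chromaticNumber := by
  obtain ⟨m, rfl⟩ : ∃ m, ℓ = m + 2 := ⟨ℓ - 2, by omega⟩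
  exact SimpleGraph.chromaticNumber_mono_of_hom (Multigraph.linkGraphMid2Hom hG)

/-- For a finite loopless multigraph `G` and `ℓ ≥ 2`,
`χ(L_ℓ(G)) ≤ χ(L_{ℓ-2}(G))`. -/
theorem chromatic_linkGraph_mono {V E : Type} [Finite V] [Finite E] (G : Multigraph V E)
    (hG : G.Loopless) (ℓ : ℕ) (hℓ : 2 ≤ ℓ) :
    ((G.linkGraph ℓ).toSimple).chromaticNumber
      ≤ ((G.linkGraph (ℓ - 2)).toSimple).chromaticNumber :=
  chromatic_linkGraph_mono_general G hG ℓ hℓ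
end

section
/- Let G be a finite loopless multigraph with degeneracy at most 4 or at least 5, and let ℓ ≥ 2 be even. Assuming the truth of Hadwiger's conjecture for graphs of chromatic number at most 6 (Robertson–Seymour–Thomas) and the bound η(L_ℓ(G)) ≥ degeneracy(G), Hadwiger's conjecture holds for L_ℓ(G): η(L_ℓ(G)) ≥ χ(L_ℓ(G)). In particular, if d := degeneracy(G) ≥ 5 and ℓ ≥ 2 is even, then χ(L_ℓ(G)) ≤ (2/3)d + 5/3 ≤ d ≤ η(L_ℓ(G)). -/
/-!
A proper colouring of `G` with `degeneracy G + 1` colours exists by the greedy argument. For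
even `ℓ`, colour an `ℓ`-link by a function `f a b c` of the colour `a` of its middle vertex and
the colours `b, c` of the two vertices next to it. The two ends of an edge of `L_ℓ(G)` are the two
halves of an `(ℓ+1)`-arc, so their middle vertices are adjacent and each one is next to the
middle of the other: it suffices that `f a b c ≠ f c a d` whenever `a ≠ c ≠ d`. Taking
`f a b c = a` gives `χ(L_ℓ(G)) ≤ d + 1`, which settles `d ≤ 4` by the case `χ ≤ 6` of
Hadwiger's conjecture. For `d ≥ 5`, compressing the colours in blocks of three gives
`χ(L_ℓ(G)) ≤ ⌊(2d+5)/3⌋ ≤ d ≤ η(L_ℓ(G))`.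
-/

theorem SimpleGraph.HasKMinor.mono {W : Type} {H : SimpleGraph W} {s t : ℕ} (h : H.HasKMinor t)
    (hst : s ≤ t) : H.HasKMinor s := by
  obtain ⟨B, hne, hconn, hdisj, hadj⟩ := h
  exact ⟨fun i => B (Fin.castLE hst i), fun i => hne _, fun i => hconn _,
    fun i j hij => hdisj _ _ ((Fin.castLE_injective hst).ne hij),
    fun i j hij => hadj _ _ ((Fin.castLE_injective hst).ne hij)⟩

theorem SimpleGraph.colorable_succ_of_forall_exists_ncard_le {V : Type} [Finite V]
    {H : SimpleGraph V} {d : ℕ}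
    (h : ∀ s : Set V, s.Nonempty → ∃ v ∈ s, (H.neighborSet v ∩ s).ncard ≤ d) :
    H.Colorable (d + 1) := by
  classical
  suffices hcolorOn : ∀ n (s : Set V), s.ncard = n →
      ∃ C : V → Fin (d + 1), ∀ u ∈ s, ∀ w ∈ s, H.Adj u w → C u ≠ C w by
    obtain ⟨C, hC⟩ := hcolorOn _ Set.univ rfl
    exact ⟨.mk C fun huw => hC _ trivial _ trivial huw⟩
  intro n
  induction n using Nat.strong_induction_on with
  | _ n ih =>
  intro s hs
  rcases s.eq_empty_or_nonempty with rfl | hne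
  · exact ⟨0, by simp⟩
  obtain ⟨v, hv, hdeg⟩ := h s hne
  obtain ⟨C, hC⟩ := ih _ (hs ▸ Set.ncard_sdiff_singleton_lt_of_mem hv) (s \ {v}) rfl
  obtain ⟨x, hx⟩ : ∃ x, x ∉ C '' (H.neighborSet v ∩ s) := by
    by_contra! hall
    have : (Set.univ : Set (Fin (d + 1))).ncard ≤ d :=
      (Set.ncard_le_ncard fun x _ => hall x).trans
        ((Set.ncard_image_le (Set.toFinite _)).trans hdeg)
    simp at this
  have hfresh : ∀ u ∈ s, H.Adj v u → C u ≠ x := fun u hu hvu hCu => hx ⟨u, ⟨hvu, hu⟩, hCu⟩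
  refine ⟨Function.update C v x, fun u hu w hw huw => ?_⟩
  rcases eq_or_ne u v with rfl | huv
  · rw [Function.update_self, Function.update_of_ne huw.ne.symm]
    exact (hfresh w hw huw).symm
  rcases eq_or_ne w v with rfl | hwv
  · rw [Function.update_self, Function.update_of_ne huv]
    exact hfresh u hu huw.symm
  rw [Function.update_of_ne huv, Function.update_of_ne hwv]
  exact hC u ⟨hu, huv⟩ w ⟨hw, hwv⟩ huw

namespace Multigraph

variable {V E : Type} {G : Multigraph V E}

theorem toSimple_adj_of_inc_eq (hG : G.Loopless) {e : E} {u w : V} (he : G.inc e = s(u, w)) :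
    G.toSimple.Adj u w :=
  ⟨fun huw => hG e (by rw [he, huw]; exact Sym2.mk_isDiag_iff.mpr rfl), e, he⟩

theorem ncard_neighborSet_inter_le [Finite E] {s : Set V} {v : V} (hv : v ∈ s) :
    (G.toSimple.neighborSet v ∩ s).ncard ≤
      Nat.card {e : E // (∀ w ∈ G.inc e, w ∈ s) ∧ v ∈ G.inc e} := by
  have hedge (u : ↥(G.toSimple.neighborSet v ∩ s)) : ∃ e : E, G.inc e = s(v, u) := u.2.1.2
  choose e he using hedge
  rw [← Nat.card_coe_set_eq]
  refine Nat.card_le_card_of_injective (fun u => ⟨e u, fun w hw => ?_, by simp [he]⟩) ?_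
  · rcases Sym2.mem_iff.mp (he u ▸ hw) with rfl | rfl
    exacts [hv, u.2.2]
  · intro u₁ u₂ h
    have : s(v, (u₁ : V)) = s(v, u₂) := by rw [← he, ← he]; exact congrArg (G.inc ∘ Subtype.val) h
    exact Subtype.ext (Sym2.congr_right.mp this)

theorem exists_ncard_neighborSet_inter_le_degeneracy [Finite E] {s : Set V} (hs : s.Nonempty) :
    ∃ v ∈ s, (G.toSimple.neighborSet v ∩ s).ncard ≤ G.degeneracy := by
  by_contra! h
  have hsub : G.HasMinDegSubgraph (G.degeneracy + 1) :=
    ⟨s, {e | ∀ w ∈ G.inc e, w ∈ s}, hs, fun _ he => he,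
      fun v hv => (h v hv).trans_le (ncard_neighborSet_inter_le hv)⟩
  have hbdd : BddAbove {d | G.HasMinDegSubgraph d} :=
    ⟨Nat.card E, fun _ ⟨_, _, ⟨v, hv⟩, _, hmin⟩ =>
      (hmin v hv).trans (Nat.card_le_card_of_injective _ Subtype.val_injective)⟩
  exact (le_csSup hbdd hsub).not_gt (Nat.lt_succ_self _)

theorem toSimple_colorable_degeneracy_add_one [Finite V] [Finite E] :
    G.toSimple.Colorable (G.degeneracy + 1) :=
  SimpleGraph.colorable_succ_of_forall_exists_ncard_le fun _ hs =>
    exists_ncard_neighborSet_inter_le_degeneracy hs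

/-- The `i`-th vertex of an arc; indices beyond `ℓ` wrap around modulo `ℓ + 1`. -/
def Arc.vert {ℓ : ℕ} (A : G.Arc ℓ) (i : ℕ) : V := A.verts (Fin.ofNat (ℓ + 1) i)

theorem Arc.vert_of_le {ℓ i : ℕ} (A : G.Arc ℓ) (hi : i ≤ ℓ) :
    A.vert i = A.verts ⟨i, Nat.lt_succ_of_le hi⟩ := by
  rw [Arc.vert]
  congr 1
  ext
  simp [Nat.mod_eq_of_lt (Nat.lt_succ_of_le hi)]

theorem Arc.vert_reverse {ℓ i : ℕ} (A : G.Arc ℓ) (hi : i ≤ ℓ) :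
    A.reverse.vert i = A.vert (ℓ - i) := by
  rw [A.reverse.vert_of_le hi, A.vert_of_le (Nat.sub_le ℓ i)]
  show A.verts (Fin.rev _) = _
  congr 1
  ext
  simp only [Fin.val_rev]
  omega

theorem Arc.vert_init {ℓ i : ℕ} (A : G.Arc (ℓ + 1)) (hi : i ≤ ℓ) : A.init.vert i = A.vert i := by
  rw [A.init.vert_of_le hi, A.vert_of_le (Nat.le_succ_of_le hi)]
  rfl

theorem Arc.vert_tail {ℓ i : ℕ} (A : G.Arc (ℓ + 1)) (hi : i ≤ ℓ) :
    A.tail.vert i = A.vert (i + 1) := by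
  rw [A.tail.vert_of_le hi, A.vert_of_le (Nat.succ_le_succ hi)]
  rfl

theorem Arc.toSimple_adj_vert {ℓ i : ℕ} (hG : G.Loopless) (A : G.Arc ℓ) (hi : i < ℓ) :
    G.toSimple.Adj (A.vert i) (A.vert (i + 1)) := by
  rw [A.vert_of_le hi.le, A.vert_of_le hi]
  exact toSimple_adj_of_inc_eq hG (A.inc_eq ⟨i, hi⟩)

def Arc.centreValue {α : Type} (g : V → V → V → α) {ℓ : ℕ} (A : G.Arc ℓ) : α :=
  g (A.vert (ℓ / 2)) (A.vert (ℓ / 2 - 1)) (A.vert (ℓ / 2 + 1))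

section centreValue

variable {α : Type} {g : V → V → V → α} {ℓ : ℕ}

theorem Arc.centreValue_reverse (hℓ : 2 ≤ ℓ) (heven : Even ℓ) (hg : ∀ a b c, g a b c = g a c b)
    (A : G.Arc ℓ) : A.reverse.centreValue g = A.centreValue g := by
  have := Nat.even_iff.mp heven
  rw [Arc.centreValue, Arc.centreValue, A.vert_reverse (by omega), A.vert_reverse (by omega),
    A.vert_reverse (by omega), hg, show ℓ - ℓ / 2 = ℓ / 2 by omega,
    show ℓ - (ℓ / 2 - 1) = ℓ / 2 + 1 by omega, show ℓ - (ℓ / 2 + 1) = ℓ / 2 - 1 by omega]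

theorem Arc.centreValue_init (hℓ : 2 ≤ ℓ) (A : G.Arc (ℓ + 1)) :
    A.init.centreValue g = g (A.vert (ℓ / 2)) (A.vert (ℓ / 2 - 1)) (A.vert (ℓ / 2 + 1)) := by
  rw [Arc.centreValue, A.vert_init (by omega), A.vert_init (by omega), A.vert_init (by omega)]

theorem Arc.centreValue_tail (hℓ : 2 ≤ ℓ) (A : G.Arc (ℓ + 1)) :
    A.tail.centreValue g = g (A.vert (ℓ / 2 + 1)) (A.vert (ℓ / 2)) (A.vert (ℓ / 2 + 2)) := by
  rw [Arc.centreValue, A.vert_tail (by omega), A.vert_tail (by omega), A.vert_tail (by omega),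
    show ℓ / 2 - 1 + 1 = ℓ / 2 by omega]

def Link.centreValue (hℓ : 2 ≤ ℓ) (heven : Even ℓ) (hg : ∀ a b c, g a b c = g a c b) :
    G.Link ℓ → α :=
  Quot.lift (Arc.centreValue g) fun A _ h => h ▸ (A.centreValue_reverse hℓ heven hg).symm

end centreValue

theorem linkGraph_colorable_of_centreValue (hG : G.Loopless) {ℓ : ℕ} (hℓ : 2 ≤ ℓ)
    (heven : Even ℓ) {m : ℕ} (g : V → V → V → Fin m) (hg : ∀ a b c, g a b c = g a c b)
    (hne : ∀ a b c d, G.toSimple.Adj a c → G.toSimple.Adj c d → g a b c ≠ g c a d) :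
    (G.linkGraph ℓ).toSimple.Colorable m := by
  refine ⟨.mk (Link.centreValue hℓ heven hg) ?_⟩
  rintro U W ⟨-, L, hL⟩
  induction L using Quot.ind with
  | mk A =>
  change s(Link.mk A.init, Link.mk A.tail) = s(U, W) at hL
  have hA : A.init.centreValue g ≠ A.tail.centreValue g := by
    rw [A.centreValue_init hℓ, A.centreValue_tail hℓ]
    exact hne _ _ _ _ (A.toSimple_adj_vert hG (by omega)) (A.toSimple_adj_vert hG (by omega))
  rcases Sym2.eq_iff.mp hL with ⟨rfl, rfl⟩ | ⟨rfl, rfl⟩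
  exacts [hA, hA.symm]

end Multigraph

/-- `f a b c` is the colour given to a link whose middle vertex has colour `a < k` and whose two
vertices next to the middle have colours `b` and `c`. -/
structure IsLinkRecoloring (k m : ℕ) (f : ℕ → ℕ → ℕ → ℕ) : Prop where
  symm : ∀ a b c, f a b c = f a c b
  lt : ∀ a b c, a < k → f a b c < m
  ne : ∀ a b c d, a < k → c < k → a ≠ c → c ≠ d → f a b c ≠ f c a d

theorem isLinkRecoloring_fst (k : ℕ) : IsLinkRecoloring k k fun a _ _ => a where
  symm _ _ _ := rfl
  lt _ _ _ ha := ha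
  ne _ _ _ _ _ _ hac _ := hac

/-- Colour `a` lies in block `a / 3` at position `a % 3`. Block `0` is kept as it is. Each block
`j ∈ [1, q]` is mapped to the two colours `2j + 1, 2j + 2`, ordered by position against a
neighbour in the same block, and falls back on its position in block `0` when both neighbours
lie in the block. The `r` remaining colours get a colour of block `0` that neither neighbour
has, except that for `r = 2` the first of them gets the new colour `2q + 3`; no neighbour of
such a vertex has fallen back on block `0`, since one of its own neighbours is outside its
block. -/
def blockRecoloring (q r a b c : ℕ) : ℕ :=
  if a < 3 then a
  else if a < 3 * (q + 1) then
    if b / 3 = a / 3 ∧ c / 3 = a / 3 then a % 3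
    else if b / 3 = a / 3 then 2 * (a / 3) + 1 + (if a % 3 < b % 3 then 0 else 1)
    else if c / 3 = a / 3 then 2 * (a / 3) + 1 + (if a % 3 < c % 3 then 0 else 1)
    else 2 * (a / 3) + 1
  else if r = 2 ∧ a = 3 * (q + 1) then 2 * q + 3
  else if b ≠ 0 ∧ c ≠ 0 then 0
  else if b ≠ 1 ∧ c ≠ 1 then 1
  else 2

set_option maxHeartbeats 1000000 in
theorem isLinkRecoloring_blockRecoloring (q r : ℕ) (hr : r < 3) :
    IsLinkRecoloring (3 * (q + 1) + r) (2 * q + 3 + r / 2) (blockRecoloring q r) where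
  symm a b c := by unfold blockRecoloring; split_ifs <;> omega
  lt a b c ha := by unfold blockRecoloring; split_ifs <;> omega
  ne a b c d ha hc hac hcd := by unfold blockRecoloring; split_ifs <;> omega

theorem Multigraph.linkGraph_colorable_of_isLinkRecoloring {V E : Type} {G : Multigraph V E}
    (hG : G.Loopless) {ℓ : ℕ} (hℓ : 2 ≤ ℓ) (heven : Even ℓ) {k m : ℕ} {f : ℕ → ℕ → ℕ → ℕ}
    (hcol : G.toSimple.Colorable k) (hf : IsLinkRecoloring k m f) :
    (G.linkGraph ℓ).toSimple.Colorable m := by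
  obtain ⟨C, hC⟩ := (SimpleGraph.colorable_iff_exists_bdd_nat_coloring k).mp hcol
  exact linkGraph_colorable_of_centreValue hG hℓ heven
    (fun a b c => ⟨f (C a) (C b) (C c), hf.lt _ _ _ (hC a)⟩)
    (fun _ _ _ => Fin.ext (hf.symm _ _ _))
    (fun _ _ _ _ hac hcd h => hf.ne _ _ _ _ (hC _) (hC _) (C.valid hac) (C.valid hcd)
      (congrArg Fin.val h))

/-- Let `G` be a finite loopless multigraph and `ℓ ≥ 2` even. Assuming
Hadwiger's conjecture for graphs of chromatic number at most 6 (for `L_ℓ(G)`) and the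
bound `η(L_ℓ(G)) ≥ degeneracy(G)`, Hadwiger's conjecture holds for `L_ℓ(G)`; and if
`d = degeneracy(G) ≥ 5` then `χ(L_ℓ(G)) ≤ ⌊(2d+5)/3⌋ ≤ d`. -/
theorem hadwiger_linkGraph_even {V E : Type} [Finite V] [Finite E] (G : Multigraph V E)
    (hG : G.Loopless) (ℓ : ℕ) (hℓ : 2 ≤ ℓ) (heven : Even ℓ)
    (hRST : ∀ n : ℕ, n ≤ 6 → ((G.linkGraph ℓ).toSimple).chromaticNumber = n →
      ((G.linkGraph ℓ).toSimple).HasKMinor n)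
    (hdeg : ((G.linkGraph ℓ).toSimple).HasKMinor G.degeneracy) :
    (∀ n : ℕ, ((G.linkGraph ℓ).toSimple).chromaticNumber = n →
      ((G.linkGraph ℓ).toSimple).HasKMinor n) ∧
    (5 ≤ G.degeneracy →
      ((G.linkGraph ℓ).toSimple).chromaticNumber ≤ (((2 * G.degeneracy + 5) / 3 : ℕ) : ℕ∞) ∧
      (2 * G.degeneracy + 5) / 3 ≤ G.degeneracy) := by
  set d := G.degeneracy
  have hcol : G.toSimple.Colorable (d + 1) := G.toSimple_colorable_degeneracy_add_one
  have hχ : (G.linkGraph ℓ).toSimple.chromaticNumber ≤ (d + 1 : ℕ) :=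
    (G.linkGraph_colorable_of_isLinkRecoloring hG hℓ heven hcol
      (isLinkRecoloring_fst _)).chromaticNumber_le
  have hχ_large (h5 : 5 ≤ d) :
      (G.linkGraph ℓ).toSimple.chromaticNumber ≤ ((2 * d + 5) / 3 : ℕ) := by
    have hf :=
      isLinkRecoloring_blockRecoloring ((d - 2) / 3) ((d - 2) % 3) (Nat.mod_lt _ (by norm_num))
    exact ((G.linkGraph_colorable_of_isLinkRecoloring hG hℓ heven
      (hcol.mono (by omega)) hf).mono (by omega)).chromaticNumber_le
  refine ⟨fun n hn => ?_, fun h5 => ⟨hχ_large h5, by omega⟩⟩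
  rcases le_or_gt d 4 with h4 | h5
  · exact hRST n (by have := hn ▸ hχ; norm_cast at this; omega) hn
  · exact hdeg.mono (by have := hn ▸ hχ_large h5; norm_cast at this; omega)
end
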